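/- arXiv:1509.06620 — 2 statements merged into one kernel-verified Lean document; each statement's English description precedes it below -/
import Mathlib

section
/- For any partition λ and any integer t ≥ 2, the t-core pre-tower terminates: there exists j such that every partition in α_j(t; λ) is empty. -/
open PowerSeries

/-- The type of all integer partitions (of any size). -/
abbrev Ptn : Type := Σ n : ℕ, Nat.Partition n

/-- Build a partition from an arbitrary multiset of naturals by discarding the zeros. -/
def ptnOfMultiset (m : Multiset ℕ) : Ptn :=
  ⟨(m.filter (fun x => 0 < x)).sum,
   ⟨m.filter (fun x => 0 < x), fun hi => (Multiset.mem_filter.mp hi).2, rfl⟩⟩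

/-- The `i`-th largest part of a partition (0-indexed), or `0` if there is none. -/
def partAt (p : Ptn) (i : ℕ) : ℕ := ((p.2.parts.sort (· ≤ ·)).reverse).getD i 0

/-- The beta-set (set of first-column hook lengths) of `p`, computed with `K` beads:
`{λ_i + (K - 1 - i) : 0 ≤ i < K}`. -/
def betaSet (p : Ptn) (K : ℕ) : Finset ℕ :=
  (Finset.range K).image (fun i => partAt p i + (K - 1 - i))

/-- The partition whose beta-set (for `S.card` beads) is the finite set `S`. -/
def ptnOfBetaSet (S : Finset ℕ) : Ptn :=
  ptnOfMultiset (((S.sort (· ≤ ·)).mapIdx (fun i b => b - i) : List ℕ) : Multiset ℕ)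

/-- A normalized number of beads for the `t`-abacus of `p`: divisible by `t` and
at least the number of parts, which makes the `t`-quotient labelling canonical. -/
def beads (t : ℕ) (p : Ptn) : ℕ := t * p.2.parts.card

/-- The `t`-core of a partition, via the abacus: push all beads down their runners. -/
def core (t : ℕ) (p : Ptn) : Ptn :=
  ptnOfBetaSet ((Finset.range t).biUnion (fun r =>
    (Finset.range (((betaSet p (beads t p)).filter (fun b => b % t = r)).card)).image
      (fun j => r + t * j)))

/-- The `t`-quotient of a partition, via the abacus: the `r`-th component is read off
from the beads on runner `r`. -/
def quotient (t : ℕ) (p : Ptn) : List Ptn :=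
  (List.range t).map (fun r =>
    ptnOfBetaSet (((betaSet p (beads t p)).filter (fun b => b % t = r)).image (fun b => b / t)))

/-- Row `j` of the `t`-core pre-tower of `p`: `α_0 = [p]`, and `α_{j+1}` is obtained by
concatenating the `t`-quotients of the partitions in `α_j`. -/
def preTower (t : ℕ) (p : Ptn) : ℕ → List Ptn
  | 0 => [p]
  | j + 1 => (preTower t p j).flatMap (quotient t)

/-- Row `j` of the `t`-core tower of `p`: the `t`-cores of the partitions in `α_j`. -/
def towerRow (t : ℕ) (p : Ptn) (j : ℕ) : List Ptn := (preTower t p j).map (core t)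

/-- The total size of a row: the sum of the sizes of its partitions. -/
def rowSize (l : List Ptn) : ℕ := (l.map (fun q => q.1)).sum

/-- The formal power series `(q^m; q^m)_∞ ^ s`, defined coefficientwise (the `n`-th
coefficient of the infinite product agrees with that of the finite product
`∏_{k=1}^n (1 - q^{mk})^s`). -/
noncomputable def eulerProd (m s : ℕ) : PowerSeries ℚ :=
  PowerSeries.mk fun n =>
    PowerSeries.coeff (R := ℚ) n (∏ k ∈ Finset.Icc 1 n, (1 - PowerSeries.X ^ (m * k)) ^ s)

/-- The series `G(q^m) = ∑_{k ≥ 1} σ_1(k) q^{mk}`. -/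
noncomputable def Gm (m : ℕ) : PowerSeries ℚ :=
  PowerSeries.mk fun n => if m ∣ n ∧ n ≠ 0 then (∑ d ∈ (n / m).divisors, (d : ℚ)) else 0
/-- The number of cells in column `j` (0-indexed) of the Young diagram of `p`. -/
def colLen (p : Ptn) (j : ℕ) : ℕ := Multiset.countP (fun a => j < a) p.2.parts

/-- The hook length of the cell in row `i`, column `j` (0-indexed) of `p`:
arm length + leg length + 1. -/
def hookLength (p : Ptn) (i j : ℕ) : ℕ := (partAt p i - j) + (colLen p j - (i + 1))

/-- A partition is a `t`-core if no hook length of a cell of its Young diagram is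
divisible by `t`. -/
def IsTCore (t : ℕ) (p : Ptn) : Prop :=
  ∀ i j : ℕ, j < partAt p i → ¬ t ∣ hookLength p i j

/-- A partition is a generalized `(j,t)`-core if every partition in row `j+1` of its
`t`-core pre-tower is empty. -/
def IsGenCore (t j : ℕ) (p : Ptn) : Prop :=
  ∀ q ∈ preTower t p (j + 1), q.1 = 0

/-- `T_{j,t}(q) = ∑_{λ ∈ P} |β_j(t;λ)| q^{|λ|}`. -/
noncomputable def Tgen (t j : ℕ) : PowerSeries ℚ :=
  PowerSeries.mk fun n => ∑ p : Nat.Partition n, (rowSize (towerRow t ⟨n, p⟩ j) : ℚ)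

/-- The number of partitions of `n`. -/
noncomputable def pfun (n : ℕ) : ℕ := Nat.card (Nat.Partition n)

/-- `a_t(n)`: the sum of the sizes of the `t`-cores of all partitions of `n`. -/
noncomputable def acore (t n : ℕ) : ℕ := ∑ p : Nat.Partition n, (core t ⟨n, p⟩).1

/-- The number of `t`-regular partitions of `n` (no part divisible by `t`). -/
noncomputable def preg (t n : ℕ) : ℕ :=
  Nat.card {p : Nat.Partition n // ∀ x ∈ p.parts, ¬ t ∣ x}

/-!
On the `t`-abacus the beads of `p` split into `t` runners. Sliding the beads of each runner
down gives the beta-set of the `t`-core, while reading each runner on its own gives the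
components of the `t`-quotient; comparing the sums of the beads gives
`|p| = |core t p| + t * |quotient t p|`. Hence every partition in row `j` of the pre-tower has
size at most `|p| / t ^ j`, and row `|p|` consists of empty partitions since `|p| < t ^ |p|`.
-/

open Finset

lemma sum_range_getD_of_length_le (l : List ℕ) {K : ℕ} (hK : l.length ≤ K) :
    ∑ i ∈ range K, l.getD i 0 = l.sum := by
  induction l generalizing K with
  | nil => simp
  | cons x l ih =>
    cases K with
    | zero => simp at hK
    | succ K =>
      rw [sum_range_succ', List.sum_cons]
      simp only [List.getD_cons_succ, List.getD_cons_zero]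
      rw [ih (by simpa using hK), add_comm]

lemma sum_mapIdx_sub_add_sum_range (l : List ℕ) (m : ℕ) (hl : l.Pairwise (· < ·))
    (hm : ∀ b ∈ l, m ≤ b) :
    (l.mapIdx fun i b => b - (m + i)).sum + ∑ i ∈ range l.length, (m + i) = l.sum := by
  induction l generalizing m with
  | nil => simp
  | cons x l ih =>
    rw [List.pairwise_cons] at hl
    have hx : m ≤ x := hm x List.mem_cons_self
    have hl' : ∀ b ∈ l, m + 1 ≤ b := fun b hb => lt_of_le_of_lt hx (hl.1 b hb)
    have := ih (m + 1) hl.2 hl'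
    have hshift : (fun i b => b - (m + (i + 1))) = fun i b => b - (m + 1 + i) := by
      funext i b
      omega
    have hshift' : ∑ i ∈ range l.length, (m + (i + 1)) = ∑ i ∈ range l.length, (m + 1 + i) :=
      sum_congr rfl fun i _ => by omega
    simp only [List.mapIdx_cons, List.sum_cons, List.length_cons, sum_range_succ', hshift]
    rw [hshift']
    omega

lemma ptnOfMultiset_fst (m : Multiset ℕ) : (ptnOfMultiset m).1 = m.sum := by
  change (m.filter _).sum = m.sum
  conv_rhs => rw [← Multiset.sum_filter_add_sum_filter_not (s := m) (fun x => 0 < x)]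
  have hzero : (m.filter fun a => ¬ 0 < a).sum = 0 :=
    Multiset.sum_eq_zero fun x hx => by have := (Multiset.mem_filter.mp hx).2; omega
  rw [hzero, add_zero]

lemma ptnOfBetaSet_fst_add_sum_range (S : Finset ℕ) :
    (ptnOfBetaSet S).1 + ∑ i ∈ range #S, i = ∑ b ∈ S, b := by
  have := sum_mapIdx_sub_add_sum_range _ 0 S.sortedLT_sort.pairwise fun b _ => Nat.zero_le b
  simp only [zero_add, length_sort] at this
  rw [ptnOfBetaSet, ptnOfMultiset_fst, Multiset.sum_coe, this, ← Multiset.sum_coe,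
    sort_eq, Finset.sum, Multiset.map_id']

lemma partAt_antitone (p : Ptn) : Antitone (partAt p) := by
  intro i j hij
  unfold partAt
  set l := (p.2.parts.sort (· ≤ ·)).reverse
  rcases lt_or_ge j l.length with hj | hj
  · rcases hij.eq_or_lt with rfl | hij
    · rfl
    have hl : l.Pairwise (· ≥ ·) := List.pairwise_reverse.mpr (Multiset.pairwise_sort _ _)
    rw [List.getD_eq_getElem _ _ hj, List.getD_eq_getElem _ _ (hij.trans hj)]
    exact List.pairwise_iff_getElem.mp hl i j (hij.trans hj) hj hij
  · rw [List.getD_eq_default _ _ hj]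
    exact Nat.zero_le _

lemma sum_range_partAt (p : Ptn) {K : ℕ} (hK : p.2.parts.card ≤ K) :
    ∑ i ∈ range K, partAt p i = p.1 := by
  unfold partAt
  rw [sum_range_getD_of_length_le _ (by simpa using hK), List.sum_reverse, ← Multiset.sum_coe,
    Multiset.sort_eq, p.2.parts_sum]

lemma strictAntiOn_partAt_add_sub (p : Ptn) (K : ℕ) :
    StrictAntiOn (fun i => partAt p i + (K - 1 - i)) (range K) := by
  intro i _ j hj hij
  have := partAt_antitone p hij.le
  simp only [coe_range, Set.mem_Iio] at hj
  change partAt p j + (K - 1 - j) < partAt p i + (K - 1 - i)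
  omega

lemma card_betaSet (p : Ptn) (K : ℕ) : #(betaSet p K) = K := by
  rw [betaSet, card_image_of_injOn (strictAntiOn_partAt_add_sub p K).injOn, card_range]

lemma sum_betaSet (p : Ptn) {K : ℕ} (hK : p.2.parts.card ≤ K) :
    ∑ b ∈ betaSet p K, b = p.1 + ∑ i ∈ range K, i := by
  rw [betaSet, sum_image (strictAntiOn_partAt_add_sub p K).injOn, sum_add_distrib,
    sum_range_partAt p hK, ← sum_range_reflect]
  congr 1
  exact sum_congr rfl fun i hi => by have := mem_range.mp hi; omega

section Runners

variable {t r : ℕ} {A : Finset ℕ}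

lemma injOn_div_of_mod_eq (hA : ∀ b ∈ A, b % t = r) : Set.InjOn (· / t) A := by
  intro b hb b' hb' h
  rw [← Nat.div_add_mod b t, ← Nat.div_add_mod b' t, hA b hb, hA b' hb']
  exact congrArg (t * · + r) h

/-- Read on its own, runner `r` of the abacus holding the beads `A` gives a component of the
quotient; slid down, it gives the beads `r, r + t, …, r + t (#A - 1)` of the core. -/
lemma mul_ptnOfBetaSet_image_div_fst_add (hA : ∀ b ∈ A, b % t = r) :
    t * (ptnOfBetaSet (A.image (· / t))).1 + ∑ j ∈ range #A, (r + t * j) = ∑ b ∈ A, b := by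
  have hinj := injOn_div_of_mod_eq hA
  have hsize := ptnOfBetaSet_fst_add_sum_range (A.image (· / t))
  rw [card_image_of_injOn hinj, sum_image hinj] at hsize
  calc t * (ptnOfBetaSet (A.image (· / t))).1 + ∑ j ∈ range #A, (r + t * j)
      = t * ((ptnOfBetaSet (A.image (· / t))).1 + ∑ j ∈ range #A, j) + r * #A := by
        rw [sum_add_distrib, sum_const, card_range, smul_eq_mul, ← mul_sum]
        ring
    _ = ∑ b ∈ A, (t * (b / t) + b % t) := by
        rw [hsize, sum_add_distrib, mul_sum, sum_congr rfl hA, sum_const, smul_eq_mul,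
          mul_comm r]
    _ = ∑ b ∈ A, b := sum_congr rfl fun b _ => Nat.div_add_mod b t

lemma sum_biUnion_runners (ht : 0 < t) (c f : ℕ → ℕ) :
    ∑ b ∈ (range t).biUnion (fun r => (range (c r)).image (r + t * ·)), f b
      = ∑ r ∈ range t, ∑ j ∈ range (c r), f (r + t * j) := by
  have hmod : ∀ r ∈ range t, ∀ j, (r + t * j) % t = r := fun r hr j => by
    rw [Nat.add_mul_mod_self_left, Nat.mod_eq_of_lt (mem_range.mp hr)]
  have hdisj : (range t : Set ℕ).PairwiseDisjoint fun r => (range (c r)).image (r + t * ·) := by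
    intro r hr r' hr' hne
    refine disjoint_left.mpr fun b hb hb' => hne ?_
    obtain ⟨j, -, rfl⟩ := mem_image.mp hb
    obtain ⟨j', -, he⟩ := mem_image.mp hb'
    rw [← hmod r hr j, ← he, hmod r' hr' j']
  rw [sum_biUnion hdisj]
  refine sum_congr rfl fun r _ => sum_image fun j _ j' _ h => ?_
  exact Nat.eq_of_mul_eq_mul_left ht (Nat.add_left_cancel h)

end Runners

lemma rowSize_quotient (t : ℕ) (p : Ptn) :
    rowSize (quotient t p) = ∑ r ∈ range t,
      (ptnOfBetaSet (((betaSet p (beads t p)).filter (· % t = r)).image (· / t))).1 := by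
  rw [rowSize, quotient, List.map_map]
  rfl

theorem core_fst_add_mul_rowSize_quotient {t : ℕ} (ht : 0 < t) (p : Ptn) :
    (core t p).1 + t * rowSize (quotient t p) = p.1 := by
  set K := beads t p
  set S := betaSet p K
  set F : ℕ → Finset ℕ := fun r => S.filter (· % t = r)
  set T := (range t).biUnion fun r => (range #(F r)).image (r + t * ·)
  have hK : p.2.parts.card ≤ K := Nat.le_mul_of_pos_left _ ht
  have hmaps : ∀ b ∈ S, b % t ∈ range t := fun b _ => mem_range.mpr (Nat.mod_lt b ht)
  have hcardT : #T = K := by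
    rw [card_eq_sum_ones, sum_biUnion_runners ht, ← card_betaSet p K,
      card_eq_sum_card_fiberwise hmaps]
    simp [F]
  have hcore : (core t p).1 + ∑ i ∈ range K, i = ∑ b ∈ T, b := by
    rw [← hcardT]
    exact ptnOfBetaSet_fst_add_sum_range T
  have hrunners : t * rowSize (quotient t p) + ∑ b ∈ T, b = ∑ b ∈ S, b := by
    rw [rowSize_quotient, sum_biUnion_runners ht, mul_sum, ← sum_add_distrib,
      ← sum_fiberwise_of_maps_to hmaps]
    exact sum_congr rfl fun r _ =>
      mul_ptnOfBetaSet_image_div_fst_add fun b hb => (mem_filter.mp hb).2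
  have hS : ∑ b ∈ S, b = p.1 + ∑ i ∈ range K, i := sum_betaSet p hK
  omega

lemma mul_fst_le_of_mem_quotient {t : ℕ} {p q : Ptn} (hq : q ∈ quotient t p) :
    t * q.1 ≤ p.1 := by
  rcases t.eq_zero_or_pos with rfl | ht
  · simp
  have hq_le : q.1 ≤ rowSize (quotient t p) :=
    List.le_sum_of_mem (List.mem_map_of_mem hq)
  have := core_fst_add_mul_rowSize_quotient ht p
  have := Nat.mul_le_mul_left t hq_le
  omega

lemma pow_mul_fst_le_of_mem_preTower {t : ℕ} {p q : Ptn} {j : ℕ} (hq : q ∈ preTower t p j) :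
    t ^ j * q.1 ≤ p.1 := by
  induction j generalizing q with
  | zero =>
    rw [preTower, List.mem_singleton] at hq
    simp [hq]
  | succ j ih =>
    obtain ⟨s, hs, hqs⟩ := List.mem_flatMap.mp hq
    calc t ^ (j + 1) * q.1 = t ^ j * (t * q.1) := by ring
      _ ≤ t ^ j * s.1 := Nat.mul_le_mul_left _ (mul_fst_le_of_mem_quotient hqs)
      _ ≤ p.1 := ih hs

/-- the `t`-core pre-tower terminates. -/
theorem pretower_terminates (t : ℕ) (ht : 2 ≤ t) (p : Ptn) :
    ∃ j : ℕ, ∀ q ∈ preTower t p j, q.1 = 0 := by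
  refine ⟨p.1, fun q hq => Nat.eq_zero_of_not_pos fun hpos => ?_⟩
  have hsize := pow_mul_fst_le_of_mem_preTower hq
  have hgrowth : p.1 < t ^ p.1 := Nat.lt_pow_self ht
  have : t ^ p.1 ≤ t ^ p.1 * q.1 := Nat.le_mul_of_pos_right _ hpos
  omega
end

section
/- For any integer m ≥ 1, the coefficients of the formal power series F_m(q) = ( ∑_{n≥1} σ_1(n) q^{mn} ) / (q; q)_∞ are nonnegative and monotonically increasing in n (for n ≥ m). -/
/-! `F_m = G(q^m) · (q; q)_∞⁻¹` is a product of two series with nonnegative coefficients, and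
`(1 - q) F_m = G(q^m) · (q²; q)_∞⁻¹` is one as well, which is monotonicity. The infinite product
is reached through its truncations: modulo `q^(N+1)`, `(q; q)_∞⁻¹` agrees with
`∏_{k ≤ N} (1 - q^k)⁻¹`, and each `(1 - q^k)⁻¹` has nonnegative coefficients. -/

open PowerSeries

theorem dvd_sub_of_mul_eq_one {R : Type*} [CommRing R] {a f g f' g' : R} (hf : f * f' = 1)
    (hg : g * g' = 1) (h : a ∣ f - g) : a ∣ f' - g' := by
  have : f' - g' = f' * g' * (g - f) := by linear_combination g' * hf - f' * hg
  rw [this, ← neg_sub]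
  exact (h.neg_right).mul_left _

namespace PowerSeries

def nonnegCoeffs (R : Type*) [CommSemiring R] [PartialOrder R] [IsOrderedRing R] :
    Subsemiring R⟦X⟧ where
  carrier := {f | ∀ n, 0 ≤ coeff n f}
  zero_mem' _ := by simp
  one_mem' n := by rw [coeff_one]; split_ifs <;> simp
  add_mem' hf hg n := by rw [map_add]; exact add_nonneg (hf n) (hg n)
  mul_mem' hf hg n := by
    rw [coeff_mul]; exact Finset.sum_nonneg fun x _ => mul_nonneg (hf x.1) (hg x.2)

theorem coeff_le_coeff_succ_of_one_sub_X_mul_mem_nonnegCoeffs {R : Type*} [CommRing R]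
    [PartialOrder R] [IsOrderedRing R] {f : R⟦X⟧} (hf : (1 - X) * f ∈ nonnegCoeffs R) (n : ℕ) :
    coeff n f ≤ coeff (n + 1) f := by
  have := hf (n + 1)
  rwa [sub_mul, one_mul, map_sub, coeff_succ_X_mul, sub_nonneg] at this

/-- The recursion for the coefficients of `(1 - h)⁻¹` only adds products of coefficients of `h`
with earlier coefficients of `(1 - h)⁻¹`. -/
theorem inv_one_sub_mem_nonnegCoeffs {K : Type*} [Field K] [LinearOrder K] [IsStrictOrderedRing K]
    {h : K⟦X⟧} (hh : h ∈ nonnegCoeffs K) (h0 : constantCoeff h = 0) :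
    (1 - h)⁻¹ ∈ nonnegCoeffs K := by
  intro n
  induction n using Nat.strong_induction_on with
  | _ n ih =>
    rw [coeff_inv]
    split_ifs with hn
    · simp [h0]
    · rw [show constantCoeff (1 - h) = 1 by simp [h0], inv_one, neg_one_mul,
        ← Finset.sum_neg_distrib]
      refine Finset.sum_nonneg fun x hx => ?_
      split_ifs with hlt
      · have hx1 : x.1 ≠ 0 := by have := Finset.HasAntidiagonal.mem_antidiagonal.mp hx; omega
        rw [map_sub, coeff_one, if_neg hx1, zero_sub, neg_mul, neg_neg]
        exact mul_nonneg (hh _) (ih _ hlt)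
      · simp

theorem prod_inv_one_sub_X_pow_mem_nonnegCoeffs {K : Type*} [Field K] [LinearOrder K]
    [IsStrictOrderedRing K] {s : Finset ℕ} (hs : 0 ∉ s) :
    ∏ k ∈ s, (1 - X ^ k)⁻¹ ∈ nonnegCoeffs K := by
  refine prod_mem fun k hk => inv_one_sub_mem_nonnegCoeffs (pow_mem ?_ k) ?_
  · intro n
    rw [coeff_X]
    split_ifs <;> simp
  · simp [zero_pow (ne_of_mem_of_not_mem hk hs)]

theorem mem_nonnegCoeffs_of_forall_X_pow_dvd_sub {R : Type*} [CommRing R] [PartialOrder R]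
    [IsOrderedRing R] {f : R⟦X⟧} (h : ∀ n, ∃ g ∈ nonnegCoeffs R, X ^ (n + 1) ∣ f - g) :
    f ∈ nonnegCoeffs R := by
  intro n
  obtain ⟨g, hg, hdvd⟩ := h n
  have := X_pow_dvd_iff.mp hdvd n n.lt_succ_self
  rw [map_sub, sub_eq_zero] at this
  exact this ▸ hg n

theorem X_pow_dvd_prod_one_sub_X_pow_sub_prod {R : Type*} [CommRing R] {s t : Finset ℕ} {n : ℕ}
    (hst : s ⊆ t) (hn : ∀ k ∈ t, k ∉ s → n ≤ k) :
    (X : R⟦X⟧) ^ n ∣ ∏ k ∈ t, (1 - X ^ k) - ∏ k ∈ s, (1 - X ^ k) := by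
  rw [← Ideal.mem_span_singleton, ← Ideal.Quotient.eq, map_prod, map_prod]
  refine (Finset.prod_subset hst fun k hkt hks => ?_).symm
  rw [map_sub, map_one, Ideal.Quotient.eq_zero_iff_mem.mpr, sub_zero]
  exact Ideal.mem_span_singleton.mpr (pow_dvd_pow X (hn k hkt hks))

end PowerSeries

open PowerSeries

theorem X_pow_dvd_eulerProd_sub_prod (N : ℕ) :
    (X : ℚ⟦X⟧) ^ (N + 1) ∣ eulerProd 1 1 - ∏ k ∈ Finset.Icc 1 N, (1 - X ^ k) := by
  refine X_pow_dvd_iff.mpr fun i hi => ?_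
  have hstable : (X : ℚ⟦X⟧) ^ (i + 1) ∣
      ∏ k ∈ Finset.Icc 1 N, (1 - X ^ k) - ∏ k ∈ Finset.Icc 1 i, (1 - X ^ k) :=
    X_pow_dvd_prod_one_sub_X_pow_sub_prod (Finset.Icc_subset_Icc_right (by omega))
      fun k hk hk' => by simp only [Finset.mem_Icc] at hk hk'; omega
  have := X_pow_dvd_iff.mp hstable i (by omega)
  rw [map_sub] at this ⊢
  simp only [eulerProd, coeff_mk, one_mul, pow_one]
  linarith

theorem constantCoeff_eulerProd : constantCoeff (eulerProd 1 1) = 1 := by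
  simp [eulerProd]

theorem X_pow_dvd_inv_eulerProd_sub_prod (N : ℕ) :
    (X : ℚ⟦X⟧) ^ (N + 1) ∣ (eulerProd 1 1)⁻¹ - ∏ k ∈ Finset.Icc 1 N, (1 - X ^ k)⁻¹ := by
  refine dvd_sub_of_mul_eq_one (PowerSeries.mul_inv_cancel _ (by simp [constantCoeff_eulerProd]))
    ?_ (X_pow_dvd_eulerProd_sub_prod N)
  rw [← Finset.prod_mul_distrib]
  refine Finset.prod_eq_one fun k hk => PowerSeries.mul_inv_cancel _ ?_
  simp [zero_pow (Nat.one_le_iff_ne_zero.mp (Finset.mem_Icc.mp hk).1)]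

theorem inv_eulerProd_mem_nonnegCoeffs : (eulerProd 1 1)⁻¹ ∈ nonnegCoeffs ℚ :=
  mem_nonnegCoeffs_of_forall_X_pow_dvd_sub fun n =>
    ⟨_, prod_inv_one_sub_X_pow_mem_nonnegCoeffs (by simp), X_pow_dvd_inv_eulerProd_sub_prod n⟩

/-- The factor `(1 - q)⁻¹` of `1 / (q; q)_∞` is cancelled by `1 - q`, leaving `1 / (q²; q)_∞`. -/
theorem one_sub_X_mul_inv_eulerProd_mem_nonnegCoeffs :
    (1 - X) * (eulerProd 1 1)⁻¹ ∈ nonnegCoeffs ℚ := by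
  refine mem_nonnegCoeffs_of_forall_X_pow_dvd_sub fun n =>
    ⟨∏ k ∈ Finset.Icc 2 (n + 1), (1 - X ^ k)⁻¹,
      prod_inv_one_sub_X_pow_mem_nonnegCoeffs (by simp), ?_⟩
  have hfactor : (1 - X : ℚ⟦X⟧) * ∏ k ∈ Finset.Icc 1 (n + 1), (1 - X ^ k)⁻¹
      = ∏ k ∈ Finset.Icc 2 (n + 1), (1 - X ^ k)⁻¹ := by
    rw [← Finset.insert_Icc_add_one_left_eq_Icc (by omega : 1 ≤ n + 1), Finset.prod_insert
      (by simp), ← mul_assoc, pow_one, PowerSeries.mul_inv_cancel _ (by simp), one_mul]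
    rfl
  rw [← hfactor, ← mul_sub]
  exact ((pow_dvd_pow X (n + 1).le_succ).trans
    (X_pow_dvd_inv_eulerProd_sub_prod (n + 1))).mul_left _

theorem Gm_mem_nonnegCoeffs (m : ℕ) : Gm m ∈ nonnegCoeffs ℚ := by
  intro n
  rw [Gm, coeff_mk]
  split_ifs
  exacts [Finset.sum_nonneg fun d _ => d.cast_nonneg, le_rfl]

theorem Fm_coefficients_monotone_general (m : ℕ) :
    (∀ n : ℕ, 0 ≤ PowerSeries.coeff (R := ℚ) n (Gm m * (eulerProd 1 1)⁻¹)) ∧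
    (∀ n : ℕ, m ≤ n →
      PowerSeries.coeff (R := ℚ) n (Gm m * (eulerProd 1 1)⁻¹)
        ≤ PowerSeries.coeff (R := ℚ) (n + 1) (Gm m * (eulerProd 1 1)⁻¹)) := by
  refine ⟨mul_mem (Gm_mem_nonnegCoeffs m) inv_eulerProd_mem_nonnegCoeffs, fun n _ => ?_⟩
  refine coeff_le_coeff_succ_of_one_sub_X_mul_mem_nonnegCoeffs ?_ n
  rw [mul_left_comm]
  exact mul_mem (Gm_mem_nonnegCoeffs m) one_sub_X_mul_inv_eulerProd_mem_nonnegCoeffs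

/-- the coefficients of `F_m(q) = (∑_{n≥1} σ_1(n) q^{mn})/(q;q)_∞` are
nonnegative and monotonically increasing (for `n ≥ m`). -/
theorem Fm_coefficients_monotone (m : ℕ) (hm : 1 ≤ m) :
    (∀ n : ℕ, 0 ≤ PowerSeries.coeff (R := ℚ) n (Gm m * (eulerProd 1 1)⁻¹)) ∧
    (∀ n : ℕ, m ≤ n →
      PowerSeries.coeff (R := ℚ) n (Gm m * (eulerProd 1 1)⁻¹)
        ≤ PowerSeries.coeff (R := ℚ) (n + 1) (Gm m * (eulerProd 1 1)⁻¹)) :=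
  Fm_coefficients_monotone_general m
end
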